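/- Let f : [0, ∞) → ℝ be convex with f(0) ≤ 0, and let A be a positive semidefinite nonzero n×n complex matrix. If φ is a unital positive linear map on matrices, then φ(f(A)) ≤ (f(‖A‖)/‖A‖)·φ(A). -/

import Mathlib

/-!
By convexity and `f 0 ≤ 0`, the chord from `0` to `c = ‖A‖` gives `f t ≤ (f c / c) * t` for
`t ∈ [0, c]`, an interval containing the spectrum of `A`. Monotonicity of the functional calculus
turns this into `f(A) ≤ (f c / c) • A` in the Loewner order, and a positive linear map preserves
that order.
-/

open Matrix
open scoped ComplexOrder Classical

/-- Functional calculus for (Hermitian) matrices via the spectral theorem. -/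
noncomputable def fc {n : ℕ} (f : ℝ → ℝ) (A : Matrix (Fin n) (Fin n) ℂ) :
    Matrix (Fin n) (Fin n) ℂ :=
  if h : A.IsHermitian then
    (h.eigenvectorUnitary : Matrix (Fin n) (Fin n) ℂ) *
      Matrix.diagonal (fun i => (f (h.eigenvalues i) : ℂ)) *
      (star h.eigenvectorUnitary : Matrix (Fin n) (Fin n) ℂ)
  else 0

/-- The Loewner order: `A ≤ B` iff `B - A` is positive semidefinite. -/
def Loewner {n : ℕ} (A B : Matrix (Fin n) (Fin n) ℂ) : Prop := (B - A).PosSemidef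

/-- The operator norm of a matrix acting on Euclidean space. -/
noncomputable def opNorm {n : ℕ} (A : Matrix (Fin n) (Fin n) ℂ) : ℝ :=
  ‖Matrix.toEuclideanCLM (𝕜 := ℂ) (n := Fin n) A‖

theorem ConvexOn.apply_le_div_mul_of_map_zero_nonpos {f : ℝ → ℝ} {c x : ℝ}
    (hf : ConvexOn ℝ (Set.Icc 0 c) f) (hf0 : f 0 ≤ 0) (hc : 0 < c) (hx : x ∈ Set.Icc 0 c) :
    f x ≤ f c / c * x := by
  have ht : 0 ≤ x / c := div_nonneg hx.1 hc.le
  have hs : 0 ≤ 1 - x / c := sub_nonneg.2 ((div_le_one hc).2 hx.2)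
  have h := hf.2 (Set.left_mem_Icc.2 hc.le) (Set.right_mem_Icc.2 hc.le) hs ht (by ring)
  simp only [smul_eq_mul, mul_zero, zero_add, div_mul_cancel₀ x hc.ne'] at h
  calc f x ≤ (1 - x / c) * f 0 + x / c * f c := h
    _ ≤ x / c * f c := by nlinarith
    _ = f c / c * x := by ring

open scoped MatrixOrder

theorem fc_eq_cfc {n : ℕ} {A : Matrix (Fin n) (Fin n) ℂ} (hA : A.IsHermitian) (f : ℝ → ℝ) :
    fc f A = cfc f A := by
  rw [hA.cfc_eq, fc, dif_pos hA]; rfl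

theorem loewner_iff_le {n : ℕ} {A B : Matrix (Fin n) (Fin n) ℂ} : Loewner A B ↔ A ≤ B := Iff.rfl

theorem opNorm_pos {n : ℕ} {A : Matrix (Fin n) (Fin n) ℂ} (hA : A ≠ 0) : 0 < opNorm A :=
  norm_pos_iff.2 ((map_ne_zero_iff _ (Matrix.toEuclideanCLM (𝕜 := ℂ) (n := Fin n)).injective).2 hA)

theorem abs_le_opNorm_of_mem_spectrum {n : ℕ} {A : Matrix (Fin n) (Fin n) ℂ} {x : ℝ}
    (hx : x ∈ spectrum ℝ A) : |x| ≤ opNorm A := by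
  have hx' : (x : ℂ) ∈ spectrum ℂ (Matrix.toEuclideanCLM (𝕜 := ℂ) (n := Fin n) A) := by
    rw [AlgEquiv.spectrum_eq]
    exact spectrum.algebraMap_mem ℂ hx
  -- `spectrum.norm_le_norm_of_mem` needs `‖1‖ = 1`, which fails on the zero space.
  have : Nonempty (Fin n) := by
    by_contra h
    have : IsEmpty (Fin n) := not_nonempty_iff.1 h
    simp [spectrum.of_subsingleton] at hx
  simpa [opNorm] using spectrum.norm_le_norm_of_mem hx'

theorem Loewner.map {n : ℕ} {A B : Matrix (Fin n) (Fin n) ℂ} (h : Loewner A B)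
    (φ : Matrix (Fin n) (Fin n) ℂ →ₗ[ℂ] Matrix (Fin n) (Fin n) ℂ)
    (hφ : ∀ B, B.PosSemidef → (φ B).PosSemidef) : Loewner (φ A) (φ B) := by
  simpa only [Loewner, map_sub] using hφ _ h

theorem stmt_4_general {n : ℕ} (f : ℝ → ℝ) (hf : ConvexOn ℝ (Set.Ici 0) f) (hf0 : f 0 ≤ 0)
    (A : Matrix (Fin n) (Fin n) ℂ) (hA : A.PosSemidef) (hA0 : A ≠ 0)
    (φ : Matrix (Fin n) (Fin n) ℂ →ₗ[ℂ] Matrix (Fin n) (Fin n) ℂ)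
    (hφ : ∀ B, B.PosSemidef → (φ B).PosSemidef) :
    Loewner (φ (fc f A)) ((f (opNorm A) / opNorm A : ℝ) • φ A) := by
  have hfA : Loewner (fc f A) ((f (opNorm A) / opNorm A : ℝ) • A) := by
    rw [loewner_iff_le, fc_eq_cfc hA.1, ← cfc_const_mul_id _ A hA.1.isSelfAdjoint]
    refine cfc_mono (fun x hx => ?_) (A.finite_real_spectrum.continuousOn _)
      (A.finite_real_spectrum.continuousOn _)
    refine (hf.subset Set.Icc_subset_Ici_self (convex_Icc _ _)).apply_le_div_mul_of_map_zero_nonpos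
      hf0 (opNorm_pos hA0) ⟨spectrum_nonneg_of_nonneg hA.nonneg hx, ?_⟩
    exact (le_abs_self x).trans (abs_le_opNorm_of_mem_spectrum hx)
  rw [← LinearMap.map_smul_of_tower]
  exact hfA.map φ hφ

theorem stmt_4 {n : ℕ} (f : ℝ → ℝ) (hf : ConvexOn ℝ (Set.Ici 0) f) (hf0 : f 0 ≤ 0)
    (A : Matrix (Fin n) (Fin n) ℂ) (hA : A.PosSemidef) (hA0 : A ≠ 0)
    (φ : Matrix (Fin n) (Fin n) ℂ →ₗ[ℂ] Matrix (Fin n) (Fin n) ℂ)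
    (hφ : ∀ B, B.PosSemidef → (φ B).PosSemidef) (hunital : φ 1 = 1) :
    Loewner (φ (fc f A)) ((f (opNorm A) / opNorm A : ℝ) • φ A) :=
  stmt_4_general f hf hf0 A hA hA0 φ hφ
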